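/- arXiv:1906.08720 — 6 statements merged into one kernel-verified Lean document; each statement's English description precedes it below -/
import Mathlib

section
/- Let E be a real inner product space, T ≥ 1 and N ≥ 1 natural numbers, β > 0 and D ≥ 0. For each t ∈ {1,…,T} let ℓ_t : E → ℝ be differentiable, convex, and β-smooth. Let a_t^i ∈ E (for t ∈ {1,…,T}, i ∈ {1,…,N}) and comparator points y_t ∈ E be given. Define iterates u_t^0 = 0 and u_t^i = (1 − 2/(i+1))·u_t^{i−1} + (2/(i+1))·a_t^i. Assume ‖a_t^i − u_t^{i−1}‖ ≤ D for all t, i, and assume the weak-learner linear-regret bound: for every i ∈ {1,…,N}, Σ_{t=1}^T ⟪∇ℓ_t(u_t^{i−1}), a_t^i − y_t⟫ ≤ R. Then Σ_{t=1}^T ℓ_t(u_t^N) − Σ_{t=1}^T ℓ_t(y_t) ≤ R + 2βD²T/N. -/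
open scoped InnerProductSpace

set_option maxHeartbeats 1600000 in
/-- DynaBoost1 (memoryless core, Theorem 3.1): boosting N weak online learners
with Frank–Wolfe step sizes η_i = 2/(i+1) against arbitrary comparators. -/
theorem dynaboost1_core
    {E : Type*} [NormedAddCommGroup E] [InnerProductSpace ℝ E] [CompleteSpace E]
    (T N : ℕ) (hT : 1 ≤ T) (hN : 1 ≤ N)
    (β D R : ℝ) (hβ : 0 < β) (hD : 0 ≤ D)
    (ℓ : ℕ → E → ℝ)
    (hdiff : ∀ t ∈ Finset.Icc 1 T, Differentiable ℝ (ℓ t))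
    (hconv : ∀ t ∈ Finset.Icc 1 T, ∀ x y : E,
      ℓ t x - ℓ t y ≥ ⟪gradient (ℓ t) y, x - y⟫_ℝ)
    (hsmooth : ∀ t ∈ Finset.Icc 1 T, ∀ x y : E,
      ℓ t x - ℓ t y ≤ ⟪gradient (ℓ t) y, x - y⟫_ℝ + β / 2 * ‖x - y‖ ^ 2)
    (a : ℕ → ℕ → E) (y : ℕ → E) (u : ℕ → ℕ → E)
    (hu0 : ∀ t, u t 0 = 0)
    (hui : ∀ t, ∀ i, 1 ≤ i →
      u t i = (1 - 2 / ((i : ℝ) + 1)) • u t (i - 1) + (2 / ((i : ℝ) + 1)) • a t i)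
    (hbound : ∀ t ∈ Finset.Icc 1 T, ∀ i ∈ Finset.Icc 1 N, ‖a t i - u t (i - 1)‖ ≤ D)
    (hweak : ∀ i ∈ Finset.Icc 1 N,
      ∑ t ∈ Finset.Icc 1 T, ⟪gradient (ℓ t) (u t (i - 1)), a t i - y t⟫_ℝ ≤ R) :
    ∑ t ∈ Finset.Icc 1 T, ℓ t (u t N) - ∑ t ∈ Finset.Icc 1 T, ℓ t (y t)
      ≤ R + 2 * β * D ^ 2 * T / N := by
  have hTpos : (0:ℝ) < T := by exact_mod_cast hT
  have hNpos : (0:ℝ) < N := by exact_mod_cast hN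
  set δ : ℕ → ℝ := fun i => ∑ t ∈ Finset.Icc 1 T, (ℓ t (u t i) - ℓ t (y t)) with hδ
  -- one-step recursion
  have step : ∀ i, 1 ≤ i → i ≤ N →
      δ i ≤ (1 - 2 / ((i:ℝ)+1)) * δ (i-1) + (2 / ((i:ℝ)+1)) * R
        + β / 2 * (2 / ((i:ℝ)+1))^2 * D^2 * T := by
    intro i hi1 hiN
    set η : ℝ := 2 / ((i:ℝ)+1) with hη
    have hipos : (1:ℝ) ≤ (i:ℝ) := by exact_mod_cast hi1
    have hη0 : 0 ≤ η := by positivity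
    have hη1 : η ≤ 1 := by
      rw [hη, div_le_one (by linarith)]; linarith
    have hiN' : i ∈ Finset.Icc 1 N := Finset.mem_Icc.mpr ⟨hi1, hiN⟩
    -- pointwise inequality
    have pt : ∀ t ∈ Finset.Icc 1 T,
        ℓ t (u t i) - ℓ t (y t)
          ≤ (1 - η) * (ℓ t (u t (i-1)) - ℓ t (y t))
            + η * ⟪gradient (ℓ t) (u t (i-1)), a t i - y t⟫_ℝ
            + β / 2 * η^2 * D^2 := by
      intro t ht
      have hud : u t i - u t (i-1) = η • (a t i - u t (i-1)) := by
        rw [hui t i hi1]; rw [hη]; module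
      have hsm := hsmooth t ht (u t i) (u t (i-1))
      rw [hud] at hsm
      rw [real_inner_smul_right] at hsm
      have hnrm : ‖η • (a t i - u t (i-1))‖^2 ≤ η^2 * D^2 := by
        rw [norm_smul, mul_pow, Real.norm_eq_abs, sq_abs]
        have hb := hbound t ht i hiN'
        have : ‖a t i - u t (i-1)‖^2 ≤ D^2 := by nlinarith [norm_nonneg (a t i - u t (i-1))]
        nlinarith [sq_nonneg η]
      have hcv := hconv t ht (y t) (u t (i-1))
      have hsplit : ⟪gradient (ℓ t) (u t (i-1)), a t i - u t (i-1)⟫_ℝ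
          = ⟪gradient (ℓ t) (u t (i-1)), a t i - y t⟫_ℝ
            + ⟪gradient (ℓ t) (u t (i-1)), y t - u t (i-1)⟫_ℝ := by
        rw [← inner_add_right]
        congr 1
        abel
      rw [hsplit] at hsm
      nlinarith [hsm, hcv, hnrm, hη0]
    have hsum := Finset.sum_le_sum pt
    have hweak' := hweak i hiN'
    rw [hδ]
    simp only
    calc ∑ t ∈ Finset.Icc 1 T, (ℓ t (u t i) - ℓ t (y t))
        ≤ ∑ t ∈ Finset.Icc 1 T, ((1 - η) * (ℓ t (u t (i-1)) - ℓ t (y t))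
            + η * ⟪gradient (ℓ t) (u t (i-1)), a t i - y t⟫_ℝ
            + β / 2 * η^2 * D^2) := hsum
      _ = (1 - η) * ∑ t ∈ Finset.Icc 1 T, (ℓ t (u t (i-1)) - ℓ t (y t))
            + η * ∑ t ∈ Finset.Icc 1 T, ⟪gradient (ℓ t) (u t (i-1)), a t i - y t⟫_ℝ
            + β / 2 * η^2 * D^2 * T := by
          rw [Finset.sum_add_distrib, Finset.sum_add_distrib, ← Finset.mul_sum,
            ← Finset.mul_sum, Finset.sum_const, Nat.card_Icc]
          simp
          ring
      _ ≤ (1 - η) * ∑ t ∈ Finset.Icc 1 T, (ℓ t (u t (i-1)) - ℓ t (y t))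
            + η * R + β / 2 * η^2 * D^2 * T := by
          have := mul_le_mul_of_nonneg_left hweak' hη0
          linarith
  -- induction: δ i ≤ R + 2 β D² T / (i+1)
  have main : ∀ i, 1 ≤ i → i ≤ N → δ i ≤ R + 2 * β * D^2 * T / ((i:ℝ)+1) := by
    intro i hi1
    induction i, hi1 using Nat.le_induction with
    | base =>
      intro h1N
      have hs := step 1 le_rfl h1N
      norm_num at hs ⊢
      nlinarith [hs, mul_nonneg (mul_nonneg hβ.le (sq_nonneg D)) hTpos.le]
    | succ n hn ih =>
      intro hsN
      have hnN : n ≤ N := le_trans (Nat.le_succ n) hsN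
      have ihn := ih hnN
      have hs := step (n+1) (by omega) hsN
      have hnn : ((n+1:ℕ):ℝ) = (n:ℝ)+1 := by push_cast; ring
      rw [show (n+1) - 1 = n from rfl] at hs
      rw [hnn] at hs
      have hx1 : (1:ℝ) ≤ (n:ℝ) := by exact_mod_cast hn
      set x : ℝ := (n:ℝ) with hx
      have hη0 : (0:ℝ) ≤ 1 - 2 / (x+1+1) := by
        rw [sub_nonneg, div_le_one (by linarith)]; linarith
      have hmul := mul_le_mul_of_nonneg_left ihn hη0
      have key : (1 - 2 / (x+1+1)) * (R + 2 * β * D^2 * T / (x+1))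
            + 2 / (x+1+1) * R + β / 2 * (2 / (x+1+1))^2 * D^2 * T
          ≤ R + 2 * β * D^2 * T / ((x+1)+1) := by
        have h1 : (0:ℝ) < x+1 := by linarith
        have h2 : (0:ℝ) < x+2 := by linarith
        rw [← sub_nonneg]
        have hdiffq : R + 2 * β * D^2 * T / ((x+1)+1)
            - ((1 - 2 / (x+1+1)) * (R + 2 * β * D^2 * T / (x+1))
              + 2 / (x+1+1) * R + β / 2 * (2 / (x+1+1))^2 * D^2 * T)
            = 2 * (β * D^2 * T) * (1 / ((x+1)*(x+2)^2)) := by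
          field_simp
          ring
        rw [hdiffq]
        positivity
      push_cast
      linarith [hs, hmul, key]
  have hfin := main N hN le_rfl
  have hδN : ∑ t ∈ Finset.Icc 1 T, ℓ t (u t N) - ∑ t ∈ Finset.Icc 1 T, ℓ t (y t) = δ N := by
    simp only [hδ, Finset.sum_sub_distrib]
  rw [hδN]
  have hlast : 2 * β * D^2 * T / ((N:ℝ)+1) ≤ 2 * β * D^2 * T / (N:ℝ) := by
    apply div_le_div_of_nonneg_left (by positivity) hNpos (by linarith)
  linarith
end

section
/- Let E be a real inner product space, T ≥ 1, N ≥ 1, m ≥ 1, β > 0, D ≥ 0. For each t ∈ {1,…,T} let ℓ_t : E → ℝ be differentiable, convex, and β-smooth. Let a_t^i ∈ E and points p_{j,t} ∈ E for j ∈ {1,…,m} be given, and let λ_1,…,λ_m ≥ 0 with Σ_j λ_j = 1. Define u_t^0 = 0 and u_t^i = (1 − 2/(i+1))·u_t^{i−1} + (2/(i+1))·a_t^i, and the convex-combination comparator y_t = Σ_{j=1}^m λ_j p_{j,t}. Assume ‖a_t^i − u_t^{i−1}‖ ≤ D for all t, i, and that for every i ∈ {1,…,N} and every j ∈ {1,…,m},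 Σ_{t=1}^T ⟪∇ℓ_t(u_t^{i−1}), a_t^i − p_{j,t}⟫ ≤ R. Then Σ_{t=1}^T ℓ_t(u_t^N) − Σ_{t=1}^T ℓ_t(y_t) ≤ R + 2βD²T/N. -/
open scoped InnerProductSpace

private lemma dynaboost1_aux (C x : ℝ) (hx : 0 < x) :
    2 * C / (x + 1) - ((1 - 2 / (x + 1)) * (2 * C / x) + 2 * C / (x + 1) ^ 2)
      = 2 * C / (x * (x + 1) ^ 2) := by
  field_simp
  ring

/-- Theorem 3.1 (DynaBoost1): boosting weak learners with linear-loss regret R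
against a base class of m comparator sequences competes against every convex
combination of the base comparators. -/
theorem dynaboost1_convex_hull
    {E : Type*} [NormedAddCommGroup E] [InnerProductSpace ℝ E] [CompleteSpace E]
    (T N m : ℕ) (hT : 1 ≤ T) (hN : 1 ≤ N) (hm : 1 ≤ m)
    (β D R : ℝ) (hβ : 0 < β) (hD : 0 ≤ D)
    (ℓ : ℕ → E → ℝ)
    (hdiff : ∀ t ∈ Finset.Icc 1 T, Differentiable ℝ (ℓ t))
    (hconv : ∀ t ∈ Finset.Icc 1 T, ∀ x y : E,
      ℓ t x - ℓ t y ≥ ⟪gradient (ℓ t) y, x - y⟫_ℝ)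
    (hsmooth : ∀ t ∈ Finset.Icc 1 T, ∀ x y : E,
      ℓ t x - ℓ t y ≤ ⟪gradient (ℓ t) y, x - y⟫_ℝ + β / 2 * ‖x - y‖ ^ 2)
    (a : ℕ → ℕ → E) (p : ℕ → ℕ → E)
    (lam : ℕ → ℝ) (hlam : ∀ j ∈ Finset.Icc 1 m, 0 ≤ lam j)
    (hlamsum : ∑ j ∈ Finset.Icc 1 m, lam j = 1)
    (u : ℕ → ℕ → E) (y : ℕ → E)
    (hy : ∀ t, y t = ∑ j ∈ Finset.Icc 1 m, lam j • p j t)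
    (hu0 : ∀ t, u t 0 = 0)
    (hui : ∀ t, ∀ i, 1 ≤ i →
      u t i = (1 - 2 / ((i : ℝ) + 1)) • u t (i - 1) + (2 / ((i : ℝ) + 1)) • a t i)
    (hbound : ∀ t ∈ Finset.Icc 1 T, ∀ i ∈ Finset.Icc 1 N, ‖a t i - u t (i - 1)‖ ≤ D)
    (hweak : ∀ i ∈ Finset.Icc 1 N, ∀ j ∈ Finset.Icc 1 m,
      ∑ t ∈ Finset.Icc 1 T, ⟪gradient (ℓ t) (u t (i - 1)), a t i - p j t⟫_ℝ ≤ R) :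
    ∑ t ∈ Finset.Icc 1 T, ℓ t (u t N) - ∑ t ∈ Finset.Icc 1 T, ℓ t (y t)
      ≤ R + 2 * β * D ^ 2 * T / N := by
  obtain ⟨φ, hφ⟩ : ∃ φ : ℕ → ℝ, ∀ i, φ i =
      ∑ t ∈ Finset.Icc 1 T, ℓ t (u t i) - ∑ t ∈ Finset.Icc 1 T, ℓ t (y t) :=
    ⟨_, fun i => rfl⟩
  obtain ⟨C, hC⟩ : ∃ C : ℝ, C = β * D ^ 2 * T := ⟨_, rfl⟩
  have hC0 : 0 ≤ C := by rw [hC]; positivity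
  -- per-iteration step inequality
  have step : ∀ i, 1 ≤ i → i ≤ N →
      φ i ≤ (1 - 2 / ((i : ℝ) + 1)) * φ (i - 1) + (2 / ((i : ℝ) + 1)) * R
        + 2 * C / ((i : ℝ) + 1) ^ 2 := by
    intro i hi1 hiN
    have hipos : (0 : ℝ) < (i : ℝ) + 1 := by positivity
    have hγ0 : (0 : ℝ) ≤ 2 / ((i : ℝ) + 1) := by positivity
    -- per-round inequality
    have h1 : ∀ t ∈ Finset.Icc 1 T,
        ℓ t (u t i) - ℓ t (u t (i - 1)) ≤
          2 / ((i : ℝ) + 1) * (⟪gradient (ℓ t) (u t (i - 1)), a t i - y t⟫_ℝ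
            + (ℓ t (y t) - ℓ t (u t (i - 1)))) + 2 * β * D ^ 2 / ((i : ℝ) + 1) ^ 2 := by
      intro t ht
      have hv : u t i - u t (i - 1) = (2 / ((i : ℝ) + 1)) • (a t i - u t (i - 1)) := by
        rw [hui t i hi1]; module
      have hs := hsmooth t ht (u t i) (u t (i - 1))
      rw [hv, real_inner_smul_right, norm_smul, Real.norm_eq_abs,
        abs_of_nonneg hγ0] at hs
      have hDb := hbound t ht i (Finset.mem_Icc.mpr ⟨hi1, hiN⟩)
      have hn2 : ‖a t i - u t (i - 1)‖ ^ 2 ≤ D ^ 2 :=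
        pow_le_pow_left₀ (norm_nonneg _) hDb 2
      have hc := hconv t ht (y t) (u t (i - 1))
      have hsplit : ⟪gradient (ℓ t) (u t (i - 1)), a t i - u t (i - 1)⟫_ℝ
          = ⟪gradient (ℓ t) (u t (i - 1)), a t i - y t⟫_ℝ
            + ⟪gradient (ℓ t) (u t (i - 1)), y t - u t (i - 1)⟫_ℝ := by
        rw [← inner_add_right]; congr 1; abel
      have hkey : β / 2 * (2 / ((i : ℝ) + 1) * ‖a t i - u t (i - 1)‖) ^ 2
          ≤ 2 * β * D ^ 2 / ((i : ℝ) + 1) ^ 2 := by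
        have e1 : (2 / ((i : ℝ) + 1) * ‖a t i - u t (i - 1)‖) ^ 2
            = 4 / ((i : ℝ) + 1) ^ 2 * ‖a t i - u t (i - 1)‖ ^ 2 := by
          field_simp; ring
        rw [e1]
        have h2 : (0 : ℝ) ≤ 4 / ((i : ℝ) + 1) ^ 2 := by positivity
        have := mul_le_mul_of_nonneg_left hn2 h2
        calc β / 2 * (4 / ((i : ℝ) + 1) ^ 2 * ‖a t i - u t (i - 1)‖ ^ 2)
            ≤ β / 2 * (4 / ((i : ℝ) + 1) ^ 2 * D ^ 2) := by nlinarith [hβ.le]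
          _ = 2 * β * D ^ 2 / ((i : ℝ) + 1) ^ 2 := by field_simp; ring
      have hc' := mul_le_mul_of_nonneg_left hc hγ0
      rw [hsplit] at hs
      nlinarith [hc']
    -- sum over t
    have hsum := Finset.sum_le_sum h1
    -- weak learner bound
    have hR : ∑ t ∈ Finset.Icc 1 T,
        ⟪gradient (ℓ t) (u t (i - 1)), a t i - y t⟫_ℝ ≤ R := by
      have hsub : ∀ t, a t i - y t
          = ∑ j ∈ Finset.Icc 1 m, lam j • (a t i - p j t) := by
        intro t
        rw [hy t]
        simp only [smul_sub, Finset.sum_sub_distrib, ← Finset.sum_smul, hlamsum, one_smul]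
      calc ∑ t ∈ Finset.Icc 1 T, ⟪gradient (ℓ t) (u t (i - 1)), a t i - y t⟫_ℝ
          = ∑ t ∈ Finset.Icc 1 T, ∑ j ∈ Finset.Icc 1 m,
              lam j * ⟪gradient (ℓ t) (u t (i - 1)), a t i - p j t⟫_ℝ := by
            refine Finset.sum_congr rfl fun t _ => ?_
            rw [hsub t, inner_sum]
            exact Finset.sum_congr rfl fun j _ => real_inner_smul_right _ _ _
        _ = ∑ j ∈ Finset.Icc 1 m, lam j * ∑ t ∈ Finset.Icc 1 T,
              ⟪gradient (ℓ t) (u t (i - 1)), a t i - p j t⟫_ℝ := by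
            rw [Finset.sum_comm]
            exact Finset.sum_congr rfl fun j _ => (Finset.mul_sum _ _ _).symm
        _ ≤ ∑ j ∈ Finset.Icc 1 m, lam j * R :=
            Finset.sum_le_sum fun j hj =>
              mul_le_mul_of_nonneg_left
                (hweak i (Finset.mem_Icc.mpr ⟨hi1, hiN⟩) j hj) (hlam j hj)
        _ = R := by rw [← Finset.sum_mul, hlamsum, one_mul]
    have hsum' : ∑ t ∈ Finset.Icc 1 T,
        (2 / ((i : ℝ) + 1) * (⟪gradient (ℓ t) (u t (i - 1)), a t i - y t⟫_ℝ
          + (ℓ t (y t) - ℓ t (u t (i - 1)))) + 2 * β * D ^ 2 / ((i : ℝ) + 1) ^ 2)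
        = 2 / ((i : ℝ) + 1) * ((∑ t ∈ Finset.Icc 1 T,
            ⟪gradient (ℓ t) (u t (i - 1)), a t i - y t⟫_ℝ) - φ (i - 1))
          + 2 * C / ((i : ℝ) + 1) ^ 2 := by
      have hcard : (Finset.Icc 1 T).card = T := by rw [Nat.card_Icc]; omega
      rw [Finset.sum_add_distrib, ← Finset.mul_sum, Finset.sum_add_distrib,
        Finset.sum_sub_distrib, Finset.sum_const, hcard, nsmul_eq_mul, hφ, hC]
      ring
    have hlhs : ∑ t ∈ Finset.Icc 1 T, (ℓ t (u t i) - ℓ t (u t (i - 1)))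
        = φ i - φ (i - 1) := by
      rw [Finset.sum_sub_distrib, hφ, hφ]; ring
    rw [hlhs, hsum'] at hsum
    have hmul := mul_le_mul_of_nonneg_left hR hγ0
    nlinarith [hmul]
  -- induction on i
  have main : ∀ i, 1 ≤ i → i ≤ N → φ i ≤ R + 2 * C / ((i : ℝ) + 1) := by
    intro i
    induction i with
    | zero => omega
    | succ k ih =>
      intro _ hkN
      rcases Nat.eq_zero_or_pos k with hk0 | hk1
      · subst hk0
        have h := step 1 le_rfl hN
        norm_num at h ⊢
        nlinarith [hC0, h]
      · have ihk := ih hk1 (by omega)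
        have h := step (k + 1) (by omega) hkN
        simp only [Nat.add_sub_cancel] at h
        push_cast at h ⊢
        have hk1' : (1 : ℝ) ≤ (k : ℝ) := by exact_mod_cast hk1
        have hco : (0 : ℝ) ≤ 1 - 2 / ((k : ℝ) + 1 + 1) := by
          rw [sub_nonneg, div_le_one (by linarith)]; linarith
        have hmul := mul_le_mul_of_nonneg_left ihk hco
        have hineq : (1 - 2 / ((k : ℝ) + 1 + 1)) * (R + 2 * C / ((k : ℝ) + 1))
            + 2 / ((k : ℝ) + 1 + 1) * R + 2 * C / ((k : ℝ) + 1 + 1) ^ 2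
            ≤ R + 2 * C / ((k : ℝ) + 1 + 1) := by
          have h1 : (0 : ℝ) < (k : ℝ) + 1 := by linarith
          have key := dynaboost1_aux C ((k : ℝ) + 1) h1
          have hnn : (0 : ℝ) ≤ 2 * C / (((k : ℝ) + 1) * ((k : ℝ) + 1 + 1) ^ 2) :=
            div_nonneg (by linarith) (by positivity)
          have expand : (1 - 2 / ((k : ℝ) + 1 + 1)) * (R + 2 * C / ((k : ℝ) + 1))
              + 2 / ((k : ℝ) + 1 + 1) * R + 2 * C / ((k : ℝ) + 1 + 1) ^ 2
              = R + ((1 - 2 / ((k : ℝ) + 1 + 1)) * (2 * C / ((k : ℝ) + 1))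
                + 2 * C / ((k : ℝ) + 1 + 1) ^ 2) := by ring
          rw [expand]
          linarith [key, hnn]
        linarith
  have hfin := main N hN le_rfl
  have hNpos : (0 : ℝ) < (N : ℝ) := by exact_mod_cast hN
  have hdiv : 2 * C / ((N : ℝ) + 1) ≤ 2 * C / (N : ℝ) := by
    gcongr
    linarith
  rw [← hφ N]
  have : 2 * β * D ^ 2 * (T : ℝ) / (N : ℝ) = 2 * C / (N : ℝ) := by rw [hC]; ring
  rw [this]
  linarith
end

section
/- Let E be a real inner product space, β > 0, and let f : E → ℝ be differentiable, convex, and β-smooth. Then for all u, a, y ∈ E and all η ∈ [0, 1]: f((1 − η)u + ηa) − f(y) ≤ (1 − η)(f(u) − f(y)) + η⟪∇f(u), a − y⟫ + (η²β/2)‖a − u‖². -/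
open scoped InnerProductSpace

/-- One-step descent inequality underlying the per-stage analysis of DynaBoost1. -/
theorem dynaboost1_one_step
    {E : Type*} [NormedAddCommGroup E] [InnerProductSpace ℝ E] [CompleteSpace E]
    (β : ℝ) (hβ : 0 < β)
    (f : E → ℝ)
    (hdiff : Differentiable ℝ f)
    (hconv : ∀ x y : E, f x - f y ≥ ⟪gradient f y, x - y⟫_ℝ)
    (hsmooth : ∀ x y : E,
      f x - f y ≤ ⟪gradient f y, x - y⟫_ℝ + β / 2 * ‖x - y‖ ^ 2)
    (u a y : E) (η : ℝ) (hη0 : 0 ≤ η) (hη1 : η ≤ 1) :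
    f ((1 - η) • u + η • a) - f y
      ≤ (1 - η) * (f u - f y) + η * ⟪gradient f u, a - y⟫_ℝ
        + η ^ 2 * β / 2 * ‖a - u‖ ^ 2 := by
  have hx : (1 - η) • u + η • a - u = η • (a - u) := by
    simp [smul_sub, sub_smul]; abel
  have hs := hsmooth ((1 - η) • u + η • a) u
  rw [hx] at hs
  have hnorm : ‖η • (a - u)‖ ^ 2 = η ^ 2 * ‖a - u‖ ^ 2 := by
    rw [norm_smul]; simp [mul_pow, abs_of_nonneg hη0]
  have hinner : ⟪gradient f u, η • (a - u)⟫_ℝ = η * ⟪gradient f u, a - u⟫_ℝ :=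
    real_inner_smul_right _ _ _
  rw [hnorm, hinner] at hs
  have hc := hconv y u
  have hid : (⟪gradient f u, a - u⟫_ℝ : ℝ)
      = ⟪gradient f u, a - y⟫_ℝ + ⟪gradient f u, y - u⟫_ℝ := by
    rw [← inner_add_right]
    congr 1
    abel
  have hc' : η * ⟪gradient f u, y - u⟫_ℝ ≤ η * (f y - f u) :=
    mul_le_mul_of_nonneg_left hc hη0
  nlinarith [hs, hc', hid]
end

section
/- Let E be a real inner product space, 0 < α ≤ β, and let f : E → ℝ be differentiable, α-strongly convex, and β-smooth. Fix 0 < η ≤ α/β, fix u ∈ E, and define g : E → ℝ by g(z) = ⟪∇f(u), z − u⟫ + (ηβ/2)‖z − u‖². Then for all a, y ∈ E: f((1 − η)u + ηa) − f(y) ≤ (1 − η)(f(u) − f(y)) + η(g(a) − g(y)). -/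
open scoped InnerProductSpace

/-- One-step contraction inequality at the heart of Theorem 3.2 (DynaBoost2). -/
theorem dynaboost2_one_step
    {E : Type*} [NormedAddCommGroup E] [InnerProductSpace ℝ E] [CompleteSpace E]
    (α β : ℝ) (hα : 0 < α) (hαβ : α ≤ β)
    (f : E → ℝ)
    (hdiff : Differentiable ℝ f)
    (hsc : ∀ x y : E,
      f x - f y ≥ ⟪gradient f y, x - y⟫_ℝ + α / 2 * ‖x - y‖ ^ 2)
    (hsmooth : ∀ x y : E,
      f x - f y ≤ ⟪gradient f y, x - y⟫_ℝ + β / 2 * ‖x - y‖ ^ 2)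
    (η : ℝ) (hη0 : 0 < η) (hη : η ≤ α / β)
    (u : E) (g : E → ℝ)
    (hg : ∀ z : E, g z = ⟪gradient f u, z - u⟫_ℝ + η * β / 2 * ‖z - u‖ ^ 2) :
    ∀ a y : E,
      f ((1 - η) • u + η • a) - f y
        ≤ (1 - η) * (f u - f y) + η * (g a - g y) := by
  intro a y
  have hβ : 0 < β := hα.trans_le hαβ
  have hηβ : η * β ≤ α := (le_div_iff₀ hβ).mp hη
  have hxu : ((1 - η) • u + η • a) - u = η • (a - u) := by module
  have h1 := hsmooth ((1 - η) • u + η • a) u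
  rw [hxu, real_inner_smul_right, norm_smul, Real.norm_eq_abs,
      abs_of_pos hη0, mul_pow] at h1
  have h2 := hsc y u
  rw [hg a, hg y]
  nlinarith [h1, mul_le_mul_of_nonneg_left h2 hη0.le,
    mul_nonneg (mul_nonneg hη0.le (sub_nonneg.mpr hηβ)) (sq_nonneg ‖y - u‖)]
end

section
/- Let E be a real inner product space, T ≥ 1, β > 0, D ≥ 0, and η ∈ [0, 1]. For each t ∈ {1,…,T} let ℓ_t : E → ℝ be differentiable, convex, and β-smooth. Let u_t, a_t, y_t ∈ E with ‖a_t − u_t‖ ≤ D for all t, and suppose that Σ_{t=1}^T ⟪∇ℓ_t(u_t), a_t − y_t⟫ ≤ R. Then Σ_{t=1}^T ℓ_t((1 − η)u_t + ηa_t) − Σ_{t=1}^T ℓ_t(y_t) ≤ (1 − η)·( Σ_{t=1}^T ℓ_t(u_t) − Σ_{t=1}^T ℓ_t(y_t) ) + ηR + (η²βD²T)/2. -/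
open scoped InnerProductSpace

/-- Per-stage summed inequality in the analysis of DynaBoost1 (Theorem 3.1). -/
theorem dynaboost1_stage
    {E : Type*} [NormedAddCommGroup E] [InnerProductSpace ℝ E] [CompleteSpace E]
    (T : ℕ) (hT : 1 ≤ T)
    (β D R : ℝ) (hβ : 0 < β) (hD : 0 ≤ D)
    (η : ℝ) (hη0 : 0 ≤ η) (hη1 : η ≤ 1)
    (ℓ : ℕ → E → ℝ)
    (hdiff : ∀ t ∈ Finset.Icc 1 T, Differentiable ℝ (ℓ t))
    (hconv : ∀ t ∈ Finset.Icc 1 T, ∀ x y : E,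
      ℓ t x - ℓ t y ≥ ⟪gradient (ℓ t) y, x - y⟫_ℝ)
    (hsmooth : ∀ t ∈ Finset.Icc 1 T, ∀ x y : E,
      ℓ t x - ℓ t y ≤ ⟪gradient (ℓ t) y, x - y⟫_ℝ + β / 2 * ‖x - y‖ ^ 2)
    (u a y : ℕ → E)
    (hbound : ∀ t ∈ Finset.Icc 1 T, ‖a t - u t‖ ≤ D)
    (hweak : ∑ t ∈ Finset.Icc 1 T, ⟪gradient (ℓ t) (u t), a t - y t⟫_ℝ ≤ R) :
    ∑ t ∈ Finset.Icc 1 T, ℓ t ((1 - η) • u t + η • a t)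
      - ∑ t ∈ Finset.Icc 1 T, ℓ t (y t)
      ≤ (1 - η) * (∑ t ∈ Finset.Icc 1 T, ℓ t (u t)
          - ∑ t ∈ Finset.Icc 1 T, ℓ t (y t))
        + η * R + η ^ 2 * β * D ^ 2 * T / 2 := by
  have key : ∀ t ∈ Finset.Icc 1 T,
      ℓ t ((1 - η) • u t + η • a t) - ℓ t (y t)
        ≤ (1 - η) * (ℓ t (u t) - ℓ t (y t))
          + η * ⟪gradient (ℓ t) (u t), a t - y t⟫_ℝ
          + η ^ 2 * β * D ^ 2 / 2 := by
    intro t ht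
    set g := gradient (ℓ t) (u t)
    have hx : (1 - η) • u t + η • a t - u t = η • (a t - u t) := by
      module
    have hs := hsmooth t ht ((1 - η) • u t + η • a t) (u t)
    rw [hx] at hs
    have hnorm : ‖η • (a t - u t)‖ ^ 2 ≤ η ^ 2 * D ^ 2 := by
      rw [norm_smul]
      have h1 : ‖a t - u t‖ ≤ D := hbound t ht
      have h2 : (0:ℝ) ≤ ‖a t - u t‖ := norm_nonneg _
      calc (‖η‖ * ‖a t - u t‖) ^ 2 = ‖η‖ ^ 2 * ‖a t - u t‖ ^ 2 := by ring
        _ ≤ ‖η‖ ^ 2 * D ^ 2 := by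
            apply mul_le_mul_of_nonneg_left (pow_le_pow_left₀ h2 h1 2) (by positivity)
        _ = η ^ 2 * D ^ 2 := by rw [Real.norm_eq_abs, sq_abs]
    have hinner : ⟪g, η • (a t - u t)⟫_ℝ = η * ⟪g, a t - u t⟫_ℝ :=
      real_inner_smul_right g _ η
    have hsplit : ⟪g, a t - u t⟫_ℝ = ⟪g, a t - y t⟫_ℝ + ⟪g, y t - u t⟫_ℝ := by
      rw [← inner_add_right]; congr 1; abel
    have hc := hconv t ht (y t) (u t)
    -- ⟪g, y t - u t⟫ ≤ ℓ t (y t) - ℓ t (u t)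
    have hlin : ⟪g, η • (a t - u t)⟫_ℝ
        ≤ η * ⟪g, a t - y t⟫_ℝ + η * (ℓ t (y t) - ℓ t (u t)) := by
      rw [hinner, hsplit, mul_add]
      have : ⟪g, y t - u t⟫_ℝ ≤ ℓ t (y t) - ℓ t (u t) := hc
      nlinarith
    have hsm2 : β / 2 * ‖η • (a t - u t)‖ ^ 2 ≤ η ^ 2 * β * D ^ 2 / 2 := by
      nlinarith
    nlinarith [hs]
  have hsum := Finset.sum_le_sum key
  rw [Finset.sum_sub_distrib] at hsum
  have hcard : (Finset.Icc 1 T).card = T := by simp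
  have hconst : ∑ _t ∈ Finset.Icc 1 T, (η ^ 2 * β * D ^ 2 / 2)
      = η ^ 2 * β * D ^ 2 * T / 2 := by
    rw [Finset.sum_const, hcard]; ring
  rw [Finset.sum_add_distrib, Finset.sum_add_distrib, ← Finset.mul_sum,
    ← Finset.mul_sum, hconst, Finset.sum_sub_distrib] at hsum
  have hR : η * (∑ t ∈ Finset.Icc 1 T, ⟪gradient (ℓ t) (u t), a t - y t⟫_ℝ) ≤ η * R :=
    mul_le_mul_of_nonneg_left hweak hη0
  linarith
end

section
/- Let E be a real inner product space, T ≥ 1, and 0 < α ≤ β. For each t ∈ {1,…,T} let ℓ_t : E → ℝ be differentiable, α-strongly convex, and β-smooth. Set η = α/β. Let u_t, a_t, y_t ∈ E, and define g_t(z) = ⟪∇ℓ_t(u_t), z − u_t⟫ + (α/2)‖z − u_t‖². Suppose Σ_{t=1}^T ( g_t(a_t) − g_t(y_t) ) ≤ R. Then Σ_{t=1}^T ℓ_t((1 − η)u_t + ηa_t) − Σ_{t=1}^T ℓ_t(y_t) ≤ (1 − η)·( Σ_{t=1}^T ℓ_t(u_t) − Σ_{t=1}^T ℓ_t(y_t)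 ) + ηR. -/
open scoped InnerProductSpace

/-- Per-stage summed contraction inequality in the proof of Theorem 3.2
(DynaBoost2), with step size η = α/β. -/
theorem dynaboost2_stage
    {E : Type*} [NormedAddCommGroup E] [InnerProductSpace ℝ E] [CompleteSpace E]
    (T : ℕ) (hT : 1 ≤ T)
    (α β R : ℝ) (hα : 0 < α) (hαβ : α ≤ β)
    (ℓ : ℕ → E → ℝ)
    (hdiff : ∀ t ∈ Finset.Icc 1 T, Differentiable ℝ (ℓ t))
    (hsc : ∀ t ∈ Finset.Icc 1 T, ∀ x y : E,
      ℓ t x - ℓ t y ≥ ⟪gradient (ℓ t) y, x - y⟫_ℝ + α / 2 * ‖x - y‖ ^ 2)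
    (hsmooth : ∀ t ∈ Finset.Icc 1 T, ∀ x y : E,
      ℓ t x - ℓ t y ≤ ⟪gradient (ℓ t) y, x - y⟫_ℝ + β / 2 * ‖x - y‖ ^ 2)
    (η : ℝ) (hη : η = α / β)
    (u a y : ℕ → E)
    (g : ℕ → E → ℝ)
    (hg : ∀ t (z : E), g t z =
      ⟪gradient (ℓ t) (u t), z - u t⟫_ℝ + α / 2 * ‖z - u t‖ ^ 2)
    (hweak : ∑ t ∈ Finset.Icc 1 T, (g t (a t) - g t (y t)) ≤ R) :
    ∑ t ∈ Finset.Icc 1 T, ℓ t ((1 - η) • u t + η • a t)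
      - ∑ t ∈ Finset.Icc 1 T, ℓ t (y t)
      ≤ (1 - η) * (∑ t ∈ Finset.Icc 1 T, ℓ t (u t)
          - ∑ t ∈ Finset.Icc 1 T, ℓ t (y t))
        + η * R := by
  have hβ : 0 < β := lt_of_lt_of_le hα hαβ
  have hη0 : 0 ≤ η := by rw [hη]; positivity
  have hηβ : η * β = α := by rw [hη]; field_simp
  have key : ∀ t ∈ Finset.Icc 1 T,
      ℓ t ((1 - η) • u t + η • a t) - ℓ t (y t)
        ≤ (1 - η) * (ℓ t (u t) - ℓ t (y t)) + η * (g t (a t) - g t (y t)) := by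
    intro t ht
    have hsm := hsmooth t ht ((1 - η) • u t + η • a t) (u t)
    have hscy := hsc t ht (y t) (u t)
    have hx : (1 - η) • u t + η • a t - u t = η • (a t - u t) := by
      rw [smul_sub]; module
    rw [hx, real_inner_smul_right, norm_smul, Real.norm_eq_abs, mul_pow, sq_abs] at hsm
    have hga := hg t (a t)
    have hgy := hg t (y t)
    nlinarith [mul_nonneg hη0 (sub_nonneg.2 (le_of_eq hga.symm)),
      mul_nonneg hη0 (sub_nonneg.2 hscy),
      mul_nonneg hη0 (sq_nonneg ‖a t - u t‖), sq_nonneg ‖a t - u t‖]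
  have hsum := Finset.sum_le_sum key
  rw [Finset.sum_add_distrib, ← Finset.mul_sum, ← Finset.mul_sum,
    Finset.sum_sub_distrib] at hsum
  have h2 : η * ∑ t ∈ Finset.Icc 1 T, (g t (a t) - g t (y t)) ≤ η * R :=
    mul_le_mul_of_nonneg_left hweak hη0
  rw [Finset.sum_sub_distrib] at hsum
  linarith
end
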